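/- arXiv:2403.07782 — 6 statements merged into one kernel-verified Lean document; each statement's English description precedes it below -/
import Mathlib

section
/- Let M be a nonempty connected topological space and let ≪ be a transitive, irreflexive binary relation on M with open pasts and open futures. Suppose φ : M → M is a homeomorphism that is ≪-equivariant and timelike. Then the whole space M is a TIP and also a TIF. (This is the abstract, order-topological form of the paper's Theorem: a connected chronological spacetime admitting a timelike conformal transformation has M as an element of both its future and past causal boundary; the relation ≪ carries exactly the properties of the chronological relation used in the proof.) -/
/-! Fix a point `a`. The past `U` of its orbit `a ≪ φ a ≪ φ² a ≪ ⋯` is open (pasts are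
open) and closed: a point `y ∉ U` has the open neighbourhood `I⁺(φ⁻¹ y)`, which misses `U`
because `U` is a past set mapped into itself by `φ`. By connectedness `U = M`, and the past
of a chain is indecomposable. Irreflexivity rules out `M = I⁻(p)`. Reversing `≪` and
replacing `φ` by `φ⁻¹` gives the statement for futures. -/

open Set Filter Topology MeasureTheory

/-- The chronological past of a set `A` with respect to relation `r`. -/
def chronPast {M : Type*} (r : M → M → Prop) (A : Set M) : Set M :=
  {x | ∃ y ∈ A, r x y}

/-- The chronological future of a set `A` with respect to relation `r`. -/
def chronFut {M : Type*} (r : M → M → Prop) (A : Set M) : Set M :=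
  {x | ∃ y ∈ A, r y x}

/-- A past set: `I⁻(U) = U`. -/
def IsPastSet {M : Type*} (r : M → M → Prop) (U : Set M) : Prop :=
  chronPast r U = U

/-- A future set: `I⁺(U) = U`. -/
def IsFutureSet {M : Type*} (r : M → M → Prop) (U : Set M) : Prop :=
  chronFut r U = U

/-- An indecomposable past set (IP): a nonempty past set that is not the union of
two past sets, each a proper subset of it. -/
def IsIP {M : Type*} (r : M → M → Prop) (U : Set M) : Prop :=
  U.Nonempty ∧ IsPastSet r U ∧
    ¬ ∃ A B : Set M, IsPastSet r A ∧ IsPastSet r B ∧ A ⊂ U ∧ B ⊂ U ∧ A ∪ B = U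

/-- An indecomposable future set (IF). -/
def IsIF {M : Type*} (r : M → M → Prop) (U : Set M) : Prop :=
  U.Nonempty ∧ IsFutureSet r U ∧
    ¬ ∃ A B : Set M, IsFutureSet r A ∧ IsFutureSet r B ∧ A ⊂ U ∧ B ⊂ U ∧ A ∪ B = U

/-- A terminal indecomposable past set (TIP): an IP not of the form `I⁻(p)`. -/
def IsTIP {M : Type*} (r : M → M → Prop) (U : Set M) : Prop :=
  IsIP r U ∧ ∀ p : M, U ≠ chronPast r {p}

/-- A terminal indecomposable future set (TIF): an IF not of the form `I⁺(p)`. -/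
def IsTIF {M : Type*} (r : M → M → Prop) (U : Set M) : Prop :=
  IsIF r U ∧ ∀ p : M, U ≠ chronFut r {p}

/-- A minimal TIP: a TIP containing no TIP as a proper subset. -/
def IsMinTIP {M : Type*} (r : M → M → Prop) (U : Set M) : Prop :=
  IsTIP r U ∧ ∀ V : Set M, IsTIP r V → V ⊆ U → V = U

section Chronology

variable {M : Type*} {r : M → M → Prop}

theorem isOpen_chronPast [TopologicalSpace M] (hOpenPast : ∀ p : M, IsOpen (chronPast r {p}))
    (A : Set M) : IsOpen (chronPast r A) := by
  have : chronPast r A = ⋃ y ∈ A, chronPast r {y} := by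
    ext x
    simp [chronPast]
  rw [this]
  exact isOpen_biUnion fun y _ => hOpenPast y

theorem chronPast_chronPast_subset [IsTrans M r] (A : Set M) :
    chronPast r (chronPast r A) ⊆ chronPast r A := by
  rintro x ⟨y, ⟨z, hz, hyz⟩, hxy⟩
  exact ⟨z, hz, _root_.trans hxy hyz⟩

theorem isClosed_of_chronPast_subset [TopologicalSpace M]
    (hOpenFut : ∀ p : M, IsOpen (chronFut r {p})) {φ : M → M} (hφ : Function.Surjective φ)
    (htimelike : ∀ x : M, r x (φ x)) {U : Set M} (hpast : chronPast r U ⊆ U)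
    (hmaps : Set.MapsTo φ U U) : IsClosed U := by
  refine isOpen_compl_iff.1 (isOpen_iff_forall_mem_open.2 fun y hy => ?_)
  obtain ⟨x, rfl⟩ := hφ y
  refine ⟨chronFut r {x}, ?_, hOpenFut x, ⟨x, rfl, htimelike x⟩⟩
  rintro z ⟨_, rfl, hxz⟩ hz
  exact hy (hmaps (hpast ⟨z, hz, hxz⟩))

theorem isIP_chronPast_range [IsTrans M r] {f : ℕ → M} (hf : ∀ n, r (f n) (f (n + 1))) :
    IsIP r (chronPast r (Set.range f)) := by
  have hchain : ∀ ⦃m n⦄, m < n → r (f m) (f n) := Nat.rel_of_forall_rel_succ_of_lt r hf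
  refine ⟨⟨f 0, f 1, ⟨1, rfl⟩, hf 0⟩, ?_, ?_⟩
  · refine (chronPast_chronPast_subset _).antisymm ?_
    rintro x ⟨_, ⟨n, rfl⟩, hx⟩
    exact ⟨f n, ⟨f (n + 1), ⟨n + 1, rfl⟩, hf n⟩, hx⟩
  · rintro ⟨A, B, hA, hB, hAU, hBU, hAB⟩
    obtain ⟨b, ⟨_, ⟨m, rfl⟩, hb⟩, hbA⟩ := Set.exists_of_ssubset hAU
    obtain ⟨c, ⟨_, ⟨n, rfl⟩, hc⟩, hcB⟩ := Set.exists_of_ssubset hBU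
    have hk : f (m + n + 1) ∈ A ∪ B :=
      hAB ▸ ⟨f (m + n + 2), ⟨_, rfl⟩, hf (m + n + 1)⟩
    rcases hk with hkA | hkB
    · exact hbA (hA ▸ ⟨_, hkA, _root_.trans hb (hchain (by omega))⟩)
    · exact hcB (hB ▸ ⟨_, hkB, _root_.trans hc (hchain (by omega))⟩)

theorem univ_ne_chronPast_singleton {p : M} (hp : ¬ r p p) :
    (Set.univ : Set M) ≠ chronPast r {p} := fun h => by
  obtain ⟨_, rfl, hpp⟩ := h ▸ Set.mem_univ p
  exact hp hpp

theorem chronPast_range_iterate_eq_univ [TopologicalSpace M] [ConnectedSpace M] [IsTrans M r]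
    (hOpenPast : ∀ p : M, IsOpen (chronPast r {p}))
    (hOpenFut : ∀ p : M, IsOpen (chronFut r {p})) {φ : M → M} (hφ : Function.Surjective φ)
    (hmono : ∀ x y : M, r x y → r (φ x) (φ y)) (htimelike : ∀ x : M, r x (φ x)) (a : M) :
    chronPast r (Set.range fun n => φ^[n] a) = Set.univ := by
  have hmaps : Set.MapsTo φ (chronPast r (Set.range fun n => φ^[n] a))
      (chronPast r (Set.range fun n => φ^[n] a)) := by
    rintro x ⟨_, ⟨n, rfl⟩, hx⟩
    exact ⟨φ^[n + 1] a, ⟨n + 1, rfl⟩, by simpa [Function.iterate_succ_apply'] using hmono _ _ hx⟩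
  refine IsClopen.eq_univ ⟨?_, isOpen_chronPast hOpenPast _⟩ ⟨a, φ a, ⟨1, rfl⟩, htimelike a⟩
  exact isClosed_of_chronPast_subset hOpenFut hφ htimelike (chronPast_chronPast_subset _) hmaps

theorem isTIP_univ_of_timelike [TopologicalSpace M] [Nonempty M] [ConnectedSpace M]
    [IsTrans M r] (hirr : ∀ p : M, ¬ r p p) (hOpenPast : ∀ p : M, IsOpen (chronPast r {p}))
    (hOpenFut : ∀ p : M, IsOpen (chronFut r {p})) {φ : M → M} (hφ : Function.Surjective φ)
    (hmono : ∀ x y : M, r x y → r (φ x) (φ y)) (htimelike : ∀ x : M, r x (φ x)) :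
    IsTIP r Set.univ := by
  obtain ⟨a⟩ := ‹Nonempty M›
  have hIP : IsIP r (chronPast r (Set.range fun n => φ^[n] a)) :=
    isIP_chronPast_range fun n => by simpa [Function.iterate_succ_apply'] using htimelike _
  rw [chronPast_range_iterate_eq_univ hOpenPast hOpenFut hφ hmono htimelike a] at hIP
  exact ⟨hIP, fun p => univ_ne_chronPast_singleton (hirr p)⟩

end Chronology

/-- On a nonempty connected topological space with a transitive,
irreflexive chronological relation having open pasts and open futures, if there is a
homeomorphism that is equivariant and timelike, then `M` itself is a TIP and a TIF. -/
theorem stmt_0 {M : Type*} [TopologicalSpace M] [Nonempty M] [ConnectedSpace M]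
    (r : M → M → Prop) (htrans : Transitive r) (hirr : Irreflexive r)
    (hOpenPast : ∀ p : M, IsOpen (chronPast r {p}))
    (hOpenFut : ∀ p : M, IsOpen (chronFut r {p}))
    (φ : M ≃ₜ M)
    (hequiv : ∀ x y : M, r x y ↔ r (φ x) (φ y))
    (htimelike : ∀ x : M, r x (φ x)) :
    IsTIP r (Set.univ : Set M) ∧ IsTIF r (Set.univ : Set M) := by
  have : IsTrans M r := ⟨htrans⟩
  refine ⟨isTIP_univ_of_timelike hirr hOpenPast hOpenFut φ.surjective
    (fun x y => (hequiv x y).1) htimelike, ?_⟩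
  exact isTIP_univ_of_timelike (r := Function.swap r) hirr hOpenFut hOpenPast φ.symm.surjective
    (fun x y h => (hequiv (φ.symm y) (φ.symm x)).2 (by simpa using h))
    (fun x => by simpa using htimelike (φ.symm x))
end

section
/- Let ≪ be a transitive, irreflexive binary relation on a set M, and let φ : M → M be a bijection that is ≪-equivariant and timelike. Then for every x ∈ M, the set U := ⋃_{n ∈ ℕ} I⁻(φⁿ(x)) is a TIP, and moreover φ(U) = U. -/
open Set Filter Topology MeasureTheory

/-!
The points `φⁿ x` form a future-directed chain, and the past of a chain is always an IP:
any two of its points lie in the past of a common chain point, and that point must fall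
into one of the two pieces of a decomposition. Equivariance and surjectivity make `φ` map
`I⁻(A)` onto `I⁻(φ A)`, so `φ` shifts the chain and fixes its past `U`. If `U` were `I⁻(p)`,
it would also equal `I⁻(φ p)`, which contains `p`, against irreflexivity.
-/

section ChronologicalPast

variable {M : Type*} {r : M → M → Prop}

@[simp]
lemma mem_chronPast_singleton {p z : M} : z ∈ chronPast r {p} ↔ r z p := by
  simp [chronPast]

lemma image_chronPast {φ : M → M} (hφ : Function.Surjective φ)
    (hequiv : ∀ x y : M, r x y ↔ r (φ x) (φ y)) (A : Set M) :
    φ '' chronPast r A = chronPast r (φ '' A) := by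
  ext z
  constructor
  · rintro ⟨y, ⟨a, ha, hya⟩, rfl⟩
    exact ⟨φ a, mem_image_of_mem φ ha, (hequiv y a).1 hya⟩
  · rintro ⟨_, ⟨a, ha, rfl⟩, hza⟩
    obtain ⟨y, rfl⟩ := hφ z
    exact ⟨y, ⟨a, ha, (hequiv y a).2 hza⟩, rfl⟩

lemma chronPast_singleton_ne_of_image_eq (hirr : Irreflexive r) {φ : M → M}
    (hφ : Function.Surjective φ) (hequiv : ∀ x y : M, r x y ↔ r (φ x) (φ y))
    (htimelike : ∀ x : M, r x (φ x)) {U : Set M} (hU : φ '' U = U) (p : M) :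
    U ≠ chronPast r {p} := by
  rintro rfl
  have hshift : chronPast r {p} = chronPast r {φ p} := by
    rw [← image_singleton, ← image_chronPast hφ hequiv, hU]
  have hp : p ∈ chronPast r {p} := hshift ▸ mem_chronPast_singleton.2 (htimelike p)
  exact hirr p (mem_chronPast_singleton.1 hp)

variable {c : ℕ → M}

lemma monotone_chronPast_chain (htrans : Transitive r) (hc : ∀ n, r (c n) (c (n + 1))) :
    Monotone fun n => chronPast r {c n} :=
  monotone_nat_of_le_succ fun n _ hz =>
    mem_chronPast_singleton.2 (htrans (mem_chronPast_singleton.1 hz) (hc n))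

lemma iUnion_chronPast_chain_succ (htrans : Transitive r) (hc : ∀ n, r (c n) (c (n + 1))) :
    ⋃ n, chronPast r {c (n + 1)} = ⋃ n, chronPast r {c n} := by
  refine Subset.antisymm (iUnion_subset fun n => subset_iUnion_of_subset (n + 1) le_rfl)
    (iUnion_subset fun n => subset_iUnion_of_subset n ?_)
  exact monotone_chronPast_chain htrans hc n.le_succ

lemma chain_mem_iUnion_chronPast (hc : ∀ n, r (c n) (c (n + 1))) (n : ℕ) :
    c n ∈ ⋃ k, chronPast r {c k} :=
  mem_iUnion.2 ⟨n + 1, mem_chronPast_singleton.2 (hc n)⟩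

lemma isPastSet_iUnion_chronPast_chain (htrans : Transitive r) (hc : ∀ n, r (c n) (c (n + 1))) :
    IsPastSet r (⋃ n, chronPast r {c n}) := by
  ext z
  simp only [chronPast, mem_iUnion, mem_singleton_iff, exists_eq_left, mem_ofPred_eq]
  constructor
  · rintro ⟨y, ⟨n, hyn⟩, hzy⟩
    exact ⟨n, htrans hzy hyn⟩
  · rintro ⟨n, hzn⟩
    exact ⟨c n, ⟨n + 1, hc n⟩, hzn⟩

lemma isIP_iUnion_chronPast_chain (htrans : Transitive r) (hc : ∀ n, r (c n) (c (n + 1))) :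
    IsIP r (⋃ n, chronPast r {c n}) := by
  refine ⟨⟨c 0, chain_mem_iUnion_chronPast hc 0⟩,
    isPastSet_iUnion_chronPast_chain htrans hc, ?_⟩
  rintro ⟨A, B, hA, hB, hAU, hBU, hAB⟩
  obtain ⟨a, haU, haA⟩ := exists_of_ssubset hAU
  obtain ⟨b, hbU, hbB⟩ := exists_of_ssubset hBU
  obtain ⟨m, ham⟩ := mem_iUnion.1 haU
  obtain ⟨n, hbn⟩ := mem_iUnion.1 hbU
  have hmono := monotone_chronPast_chain htrans hc
  have ha : r a (c (max m n)) := mem_chronPast_singleton.1 (hmono (le_max_left m n) ham)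
  have hb : r b (c (max m n)) := mem_chronPast_singleton.1 (hmono (le_max_right m n) hbn)
  rcases hAB ▸ chain_mem_iUnion_chronPast hc (max m n) with hcA | hcB
  · exact haA (hA ▸ ⟨_, hcA, ha⟩)
  · exact hbB (hB ▸ ⟨_, hcB, hb⟩)

end ChronologicalPast

/-- For a transitive irreflexive relation and a timelike equivariant
bijection `φ`, the set `⋃ n, I⁻(φⁿ x)` is a TIP invariant under `φ`. -/
theorem stmt_1 {M : Type*} (r : M → M → Prop)
    (htrans : Transitive r) (hirr : Irreflexive r)
    (φ : M → M) (hbij : Function.Bijective φ)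
    (hequiv : ∀ x y : M, r x y ↔ r (φ x) (φ y))
    (htimelike : ∀ x : M, r x (φ x)) (x : M) :
    IsTIP r (⋃ n : ℕ, chronPast r {φ^[n] x}) ∧
      φ '' (⋃ n : ℕ, chronPast r {φ^[n] x}) = ⋃ n : ℕ, chronPast r {φ^[n] x} := by
  have hchain : ∀ n, r (φ^[n] x) (φ^[n + 1] x) := fun n => by
    rw [Function.iterate_succ_apply']
    exact htimelike _
  have hinv :
      φ '' (⋃ n : ℕ, chronPast r {φ^[n] x}) = ⋃ n : ℕ, chronPast r {φ^[n] x} := by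
    simp only [image_iUnion, image_chronPast hbij.2 hequiv, image_singleton,
      ← Function.iterate_succ_apply' φ]
    exact iUnion_chronPast_chain_succ htrans hchain
  exact ⟨⟨isIP_iUnion_chronPast_chain htrans hchain,
    chronPast_singleton_ne_of_image_eq hirr hbij.2 hequiv htimelike hinv⟩, hinv⟩
end

section
/- Let M be a connected topological space and let ≪ be a binary relation on M with open pasts and open futures. Let φ : M → M be a homeomorphism with x ≪ φ(x) for all x ∈ M. If U ⊆ M is a nonempty past set with φ(U) = U, then U = M. -/
open Set Filter Topology MeasureTheory

/-! If `x` lies in the closure of a `φ`-invariant past set `U`, so does `φ x`; as `I⁺(x)` is a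
neighbourhood of `φ x`, it meets `U`, whence `x ∈ I⁻(U) = U`. So `U` is closed, open pasts make it
open, and connectedness finishes the argument. -/

section PastSet

variable {M : Type*} [TopologicalSpace M] {r : M → M → Prop} {U : Set M}

theorem IsPastSet.isOpen (hOpenPast : ∀ p : M, IsOpen (chronPast r {p}))
    (hpast : IsPastSet r U) : IsOpen U := by
  refine isOpen_iff_forall_mem_open.mpr fun x hx => ?_
  rw [← hpast] at hx
  obtain ⟨y, hyU, hxy⟩ := hx
  refine ⟨chronPast r {y}, ?_, hOpenPast y, y, rfl, hxy⟩
  rintro z ⟨_, rfl, hzy⟩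
  rw [← hpast]
  exact ⟨_, hyU, hzy⟩

theorem IsPastSet.isClosed_of_mapsTo (hOpenFut : ∀ p : M, IsOpen (chronFut r {p}))
    {φ : M → M} (hφ : Continuous φ) (htimelike : ∀ x : M, r x (φ x))
    (hpast : IsPastSet r U) (hmaps : MapsTo φ U U) : IsClosed U := by
  refine closure_subset_iff_isClosed.mp fun x hx => ?_
  have hφx : φ x ∈ closure U :=
    closure_mono hmaps.image_subset (image_closure_subset_closure_image hφ ⟨x, hx, rfl⟩)
  have hnhds : chronFut r {x} ∈ 𝓝 (φ x) := (hOpenFut x).mem_nhds ⟨x, rfl, htimelike x⟩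
  obtain ⟨y, ⟨_, rfl, hxy⟩, hyU⟩ := mem_closure_iff_nhds.mp hφx _ hnhds
  rw [← hpast]
  exact ⟨y, hyU, hxy⟩

end PastSet

/-- On a connected space with open pasts and open futures, a nonempty past
set invariant under a timelike homeomorphism is the whole space. -/
theorem stmt_2 {M : Type*} [TopologicalSpace M] [ConnectedSpace M]
    (r : M → M → Prop)
    (hOpenPast : ∀ p : M, IsOpen (chronPast r {p}))
    (hOpenFut : ∀ p : M, IsOpen (chronFut r {p}))
    (φ : M ≃ₜ M)
    (htimelike : ∀ x : M, r x (φ x))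
    (U : Set M) (hne : U.Nonempty) (hpast : IsPastSet r U)
    (hinv : φ '' U = U) :
    U = Set.univ := by
  have hmaps : MapsTo φ U U := mapsTo_iff_image_subset.mpr hinv.subset
  exact IsClopen.eq_univ
    ⟨hpast.isClosed_of_mapsTo hOpenFut φ.continuous htimelike hmaps, hpast.isOpen hOpenPast⟩ hne
end

section
/- Let M be a connected topological space and let ≪ be a binary relation on M with open pasts and open futures. Let φ : M → M be a homeomorphism that is ≪-equivariant and timelike. If U ⊆ M is a minimal TIP, then U = M. -/
open Set Filter Topology MeasureTheory

lemma chronPast_preimage {M : Type*} (r : M → M → Prop) (e : M ≃ M)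
    (hequiv : ∀ x y : M, r x y ↔ r (e x) (e y)) (A : Set M) :
    chronPast r (e ⁻¹' A) = e ⁻¹' chronPast r A := by
  ext x
  simp only [chronPast, Set.mem_setOf_eq, Set.mem_preimage]
  constructor
  · rintro ⟨y, hy, hxy⟩
    exact ⟨e y, hy, (hequiv x y).mp hxy⟩
  · rintro ⟨y, hy, hxy⟩
    refine ⟨e.symm y, by simpa using hy, ?_⟩
    have h := hequiv x (e.symm y)
    rw [e.apply_symm_apply] at h
    exact h.mpr hxy

lemma isPastSet_preimage {M : Type*} (r : M → M → Prop) (e : M ≃ M)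
    (hequiv : ∀ x y : M, r x y ↔ r (e x) (e y)) {A : Set M}
    (hA : IsPastSet r A) : IsPastSet r (e ⁻¹' A) := by
  unfold IsPastSet at *
  rw [chronPast_preimage r e hequiv, hA]

lemma hequiv_symm {M : Type*} (r : M → M → Prop) (e : M ≃ M)
    (hequiv : ∀ x y : M, r x y ↔ r (e x) (e y)) :
    ∀ x y : M, r x y ↔ r (e.symm x) (e.symm y) := by
  intro x y
  have h := hequiv (e.symm x) (e.symm y)
  rw [e.apply_symm_apply, e.apply_symm_apply] at h
  exact h.symm

lemma isTIP_preimage {M : Type*} (r : M → M → Prop) (e : M ≃ M)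
    (hequiv : ∀ x y : M, r x y ↔ r (e x) (e y)) {U : Set M}
    (hU : IsTIP r U) : IsTIP r (e ⁻¹' U) := by
  obtain ⟨⟨hne, hpast, hind⟩, htip⟩ := hU
  have hsymm := hequiv_symm r e hequiv
  have hpre : ∀ A : Set M, e.symm ⁻¹' (e ⁻¹' A) = A := by
    intro A; ext x; simp
  refine ⟨⟨?_, isPastSet_preimage r e hequiv hpast, ?_⟩, ?_⟩
  · obtain ⟨u, hu⟩ := hne
    exact ⟨e.symm u, by simpa using hu⟩
  · rintro ⟨A, B, hA, hB, hAU, hBU, hABU⟩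
    refine hind ⟨e.symm ⁻¹' A, e.symm ⁻¹' B,
      isPastSet_preimage r e.symm hsymm hA,
      isPastSet_preimage r e.symm hsymm hB, ?_, ?_, ?_⟩
    · constructor
      · intro x hx; rw [← hpre U]; exact hAU.1 hx
      · intro hsub
        refine hAU.2 (fun x hx => ?_)
        simpa using hsub hx
    · constructor
      · intro x hx; rw [← hpre U]; exact hBU.1 hx
      · intro hsub
        refine hBU.2 (fun x hx => ?_)
        simpa using hsub hx
    · rw [← Set.preimage_union, hABU, hpre]
  · intro p hp
    refine htip (e p) ?_
    have : e.symm ⁻¹' (e ⁻¹' U) = e.symm ⁻¹' chronPast r {p} := by rw [hp]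
    rw [hpre] at this
    rw [← chronPast_preimage r e.symm hsymm] at this
    have hs : e.symm ⁻¹' ({p} : Set M) = {e p} := by
      ext x
      simp only [Set.mem_preimage, Set.mem_singleton_iff, Equiv.symm_apply_eq]
    rwa [hs] at this

/-- On a connected space with open pasts and open futures admitting an
equivariant timelike homeomorphism, every minimal TIP is the whole space. -/
theorem stmt_3 {M : Type*} [TopologicalSpace M] [ConnectedSpace M]
    (r : M → M → Prop)
    (hOpenPast : ∀ p : M, IsOpen (chronPast r {p}))
    (hOpenFut : ∀ p : M, IsOpen (chronFut r {p}))
    (φ : M ≃ₜ M)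
    (hequiv : ∀ x y : M, r x y ↔ r (φ x) (φ y))
    (htimelike : ∀ x : M, r x (φ x))
    (U : Set M) (hU : IsMinTIP r U) :
    U = Set.univ := by
  obtain ⟨hTIP, hmin⟩ := hU
  obtain ⟨⟨hne, hpast, -⟩, -⟩ := id hTIP
  -- φ ⁻¹' U is a TIP contained in U, hence equals U by minimality
  have hsubU : (φ : M → M) ⁻¹' U ⊆ U := by
    intro x hx
    have : x ∈ chronPast r U := ⟨φ x, hx, htimelike x⟩
    rwa [hpast] at this
  have hinv : (φ : M → M) ⁻¹' U = U :=
    hmin _ (isTIP_preimage r φ.toEquiv hequiv hTIP) hsubU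
  -- U is open
  have hUopen : IsOpen U := by
    have : U = ⋃ y ∈ U, chronPast r {y} := by
      conv_lhs => rw [← hpast]
      ext x
      simp only [chronPast, Set.mem_setOf_eq, Set.mem_iUnion, Set.mem_singleton_iff]
      constructor
      · rintro ⟨y, hy, hxy⟩; exact ⟨y, hy, y, rfl, hxy⟩
      · rintro ⟨y, hy, z, rfl, hxy⟩; exact ⟨z, hy, hxy⟩
    rw [this]
    exact isOpen_biUnion fun y _ => hOpenPast y
  -- Uᶜ is open
  have hUcopen : IsOpen Uᶜ := by
    rw [isOpen_iff_forall_mem_open]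
    intro x hx
    refine ⟨chronFut r {φ.symm x}, ?_, hOpenFut _, ?_⟩
    · intro z hz hzU
      obtain ⟨y, hy, hryz⟩ := hz
      rw [Set.mem_singleton_iff] at hy
      subst hy
      have h1 : φ.symm x ∈ chronPast r U := ⟨z, hzU, hryz⟩
      rw [hpast] at h1
      have : φ.symm x ∈ (φ : M → M) ⁻¹' U := by rwa [hinv]
      rw [Set.mem_preimage, φ.apply_symm_apply] at this
      exact hx this
    · refine ⟨φ.symm x, rfl, ?_⟩
      have h := htimelike (φ.symm x)
      rwa [φ.apply_symm_apply] at h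
  have hclopen : IsClopen U := ⟨⟨hUcopen⟩, hUopen⟩
  rcases isClopen_iff.mp hclopen with h | h
  · exact absurd (h ▸ hne) Set.not_nonempty_empty
  · exact h
end

section
/- Let M be a topological space and ≪ a binary relation on M with open pasts, and assume that every point x ∈ M lies in the closure of I⁺(x) (every neighborhood of x contains a point y with x ≪ y). If (Uₙ)_{n ∈ ℕ} is a sequence of past sets, then the interior of ⋂ₙ Uₙ is a past set. -/
/-!
The interior of any set `S` with `I⁻(S) ⊆ S` is a past set. If `x ≪ y` with `y ∈ int S`, then
`I⁻(y)` is an open subset of `S` containing `x`, so `x ∈ int S`. Conversely, a point `x` of an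
open set `V` has, by the closure hypothesis, some `y ∈ V` with `x ≪ y`, so `V ⊆ I⁻(V)`.
-/

open Set Filter Topology MeasureTheory

theorem chronPast_mono {M : Type*} (r : M → M → Prop) {A B : Set M} (hAB : A ⊆ B) :
    chronPast r A ⊆ chronPast r B :=
  fun _ ⟨y, hy, hxy⟩ => ⟨y, hAB hy, hxy⟩

theorem chronPast_iInter_subset {M ι : Type*} (r : M → M → Prop) (U : ι → Set M)
    (hU : ∀ i, IsPastSet r (U i)) : chronPast r (⋂ i, U i) ⊆ ⋂ i, U i :=
  subset_iInter fun i => (chronPast_mono r (iInter_subset U i)).trans (hU i).subset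

theorem chronPast_interior_subset {M : Type*} [TopologicalSpace M] (r : M → M → Prop)
    (hOpenPast : ∀ p : M, IsOpen (chronPast r {p})) {S : Set M} (hS : chronPast r S ⊆ S) :
    chronPast r (interior S) ⊆ interior S := by
  rintro x ⟨y, hy, hxy⟩
  have hpast_y : chronPast r {y} ⊆ S :=
    (chronPast_mono r (singleton_subset_iff.2 (interior_subset hy))).trans hS
  exact interior_maximal hpast_y (hOpenPast y) ⟨y, rfl, hxy⟩

theorem subset_chronPast_of_isOpen {M : Type*} [TopologicalSpace M] (r : M → M → Prop)
    (hdense : ∀ x : M, x ∈ closure (chronFut r {x})) {V : Set M} (hV : IsOpen V) :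
    V ⊆ chronPast r V := by
  intro x hx
  obtain ⟨y, hyV, x', rfl, hxy⟩ := mem_closure_iff.1 (hdense x) V hV hx
  exact ⟨y, hyV, hxy⟩

theorem isPastSet_interior {M : Type*} [TopologicalSpace M] (r : M → M → Prop)
    (hOpenPast : ∀ p : M, IsOpen (chronPast r {p}))
    (hdense : ∀ x : M, x ∈ closure (chronFut r {x})) {S : Set M} (hS : chronPast r S ⊆ S) :
    IsPastSet r (interior S) :=
  (chronPast_interior_subset r hOpenPast hS).antisymm
    (subset_chronPast_of_isOpen r hdense isOpen_interior)

/-- With open pasts, and assuming every point is in the closure of its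
chronological future, the interior of a countable intersection of past sets is a past set. -/
theorem stmt_6 {M : Type*} [TopologicalSpace M] (r : M → M → Prop)
    (hOpenPast : ∀ p : M, IsOpen (chronPast r {p}))
    (hdense : ∀ x : M, x ∈ closure (chronFut r {x}))
    (U : ℕ → Set M) (hU : ∀ n, IsPastSet r (U n)) :
    IsPastSet r (interior (⋂ n, U n)) :=
  isPastSet_interior r hOpenPast hdense (chronPast_iInter_subset r U hU)
end

section
/- Let ≪ be a binary relation on a set M and let φ : M → M be a bijection that is ≪-equivariant and timelike. If U ⊆ M is a TIP, then φ⁻¹(U) is a TIP and φ⁻¹(U) ⊆ U. -/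
open Set Filter Topology MeasureTheory

/-
An equivariant bijection `φ` transports the whole causal structure: pulling back along `φ`
commutes with `I⁻`, so it preserves past sets, indecomposability, and sends `I⁻(φ p)` to `I⁻(p)`;
hence it preserves TIPs. Timelikeness gives `x ≪ φ x`, so `φ x ∈ U` puts `x` in the past set `U`.
-/

section ChronologicalTransport

variable {M : Type*} {r : M → M → Prop}

theorem preimage_chronPast {φ : M → M} (hsurj : Function.Surjective φ)
    (hequiv : ∀ x y, r x y ↔ r (φ x) (φ y)) (A : Set M) :
    φ ⁻¹' chronPast r A = chronPast r (φ ⁻¹' A) := by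
  ext x
  constructor
  · rintro ⟨y, hy, hxy⟩
    obtain ⟨z, rfl⟩ := hsurj y
    exact ⟨z, hy, (hequiv x z).mpr hxy⟩
  · rintro ⟨z, hz, hxz⟩
    exact ⟨φ z, hz, (hequiv x z).mp hxz⟩

theorem IsPastSet.preimage {φ : M → M} (hsurj : Function.Surjective φ)
    (hequiv : ∀ x y, r x y ↔ r (φ x) (φ y)) {A : Set M} (hA : IsPastSet r A) :
    IsPastSet r (φ ⁻¹' A) := by
  rw [IsPastSet, ← preimage_chronPast hsurj hequiv, hA]

theorem IsPastSet.preimage_subset {φ : M → M} (htimelike : ∀ x, r x (φ x)) {U : Set M}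
    (hU : IsPastSet r U) : φ ⁻¹' U ⊆ U := by
  intro x hx
  rw [← hU]
  exact ⟨φ x, hx, htimelike x⟩

variable (e : M ≃ M) (hequiv : ∀ x y, r x y ↔ r (e x) (e y))
include hequiv

theorem rel_iff_rel_equiv_symm (x y : M) : r x y ↔ r (e.symm x) (e.symm y) := by
  simpa using (hequiv (e.symm x) (e.symm y)).symm

theorem IsPastSet.image {A : Set M} (hA : IsPastSet r A) : IsPastSet r (e '' A) := by
  rw [e.image_eq_preimage_symm]
  exact hA.preimage e.symm.surjective (rel_iff_rel_equiv_symm e hequiv)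

theorem preimage_chronPast_singleton (p : M) :
    e ⁻¹' chronPast r {e p} = chronPast r {p} := by
  rw [preimage_chronPast e.surjective hequiv, ← Set.image_singleton, e.preimage_image]

theorem IsIP.preimage {U : Set M} (hU : IsIP r U) : IsIP r (e ⁻¹' U) := by
  obtain ⟨⟨u, hu⟩, hpast, hindec⟩ := hU
  refine ⟨⟨e.symm u, by simpa using hu⟩, hpast.preimage e.surjective hequiv, ?_⟩
  rintro ⟨A, B, hA, hB, hAU, hBU, hABU⟩
  have himage_ssubset {C : Set M} (hC : C ⊂ e ⁻¹' U) : e '' C ⊂ U := by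
    simpa only [e.image_preimage] using e.injective.image_strictMono hC
  refine hindec ⟨e '' A, e '' B, hA.image e hequiv, hB.image e hequiv,
    himage_ssubset hAU, himage_ssubset hBU, ?_⟩
  rw [← Set.image_union, hABU, e.image_preimage]

theorem IsTIP.preimage {U : Set M} (hU : IsTIP r U) : IsTIP r (e ⁻¹' U) := by
  refine ⟨hU.1.preimage e hequiv, fun p hp => hU.2 (e p) ?_⟩
  rw [← preimage_chronPast_singleton e hequiv] at hp
  exact Set.preimage_injective.mpr e.surjective hp

end ChronologicalTransport

/-- For an equivariant timelike bijection `φ`, the preimage of a TIP is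
again a TIP and is contained in the original TIP. -/
theorem stmt_12 {M : Type*} (r : M → M → Prop)
    (φ : M → M) (hbij : Function.Bijective φ)
    (hequiv : ∀ x y : M, r x y ↔ r (φ x) (φ y))
    (htimelike : ∀ x : M, r x (φ x))
    (U : Set M) (hU : IsTIP r U) :
    IsTIP r (φ ⁻¹' U) ∧ φ ⁻¹' U ⊆ U := by
  exact ⟨hU.preimage (Equiv.ofBijective φ hbij) hequiv,
    hU.1.2.1.preimage_subset htimelike⟩
end
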